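/- Let R be a commutative unital ring and A an associative unital R-algebra. Then the following are equivalent: (1) A is quasi-stable, i.e., every R-submodule J of A with 1 ∉ J is a (two-sided) Mathieu subspace of A; (2) every left A-module M is quasi-stable, i.e., for every R-submodule N of M and every u ∈ M with u ∉ N, the set (N : u) is a (two-sided) Mathieu subspace of A. -/
import Mathlib


universe u v

/-- `J` is a (two-sided) Mathieu subspace of the `R`-algebra `A`. -/
def IsMathieuSubspace {R A : Type*} [CommRing R] [Ring A] [Algebra R A]
    (J : Submodule R A) : Prop :=
  ∀ a : A, (∀ m : ℕ, 1 ≤ m → a ^ m ∈ J) →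
    ∀ b c : A, ∃ N : ℕ, 1 ≤ N ∧ ∀ m : ℕ, N ≤ m → b * a ^ m * c ∈ J

/-- For `u ∈ M` and an `R`-subspace `N` of `M`, the `R`-subspace
`(N : u) = {a ∈ A | a • u ∈ N}` of `A`. -/
def colonSub {R A M : Type*} [CommRing R] [Ring A] [Algebra R A] [AddCommGroup M]
    [Module A M] [Module R M] [IsScalarTower R A M]
    (N : Submodule R M) (u : M) : Submodule R A where
  carrier := {a : A | a • u ∈ N}
  add_mem' := by
    intro a b ha hb
    simp only [Set.mem_setOf_eq, add_smul] at *
    exact N.add_mem ha hb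
  zero_mem' := by
    simp only [Set.mem_setOf_eq, zero_smul]
    exact N.zero_mem
  smul_mem' := by
    intro r a ha
    simp only [Set.mem_setOf_eq] at *
    rw [smul_assoc]
    exact N.smul_mem r ha

theorem stmt14 {R : Type v} {A : Type u} [CommRing R] [Ring A] [Algebra R A] :
    (∀ J : Submodule R A, (1 : A) ∉ J → IsMathieuSubspace J) ↔
    (∀ (M : Type u) [AddCommGroup M] [Module A M] [Module R M] [IsScalarTower R A M]
      (N : Submodule R M) (u : M), u ∉ N → IsMathieuSubspace (colonSub (A := A) N u)) := by
  constructor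
  · intro h M _ _ _ _ N u hu
    refine h (colonSub N u) ?_
    simpa [colonSub, Submodule.mem_mk] using hu
  · intro h J hJ
    have hcol : colonSub (A := A) J (1 : A) = J := by
      ext a
      simp [colonSub, Submodule.mem_mk, smul_eq_mul]
    have := h A J 1 (by simpa using hJ)
    rwa [hcol] at this
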